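/- arXiv:1608.06095 — 2 statements merged into one kernel-verified Lean document; each statement's English description precedes it below -/
import Mathlib

section
/- Let G and H be topological groups, U ⊆ G and V ⊆ H open subsets, and E a locally convex space. A map f : U × V → E is C^{1,1} if and only if the flipped map g : V × U → E, g(y,x) := f(x,y), is C^{1,1} (with the roles of G and H interchanged). In this case d^{(1,0)}g(y,x,η) = d^{(0,1)}f(x,y,η), d^{(0,1)}g(y,x,γ) = d^{(1,0)}f(x,y,γ), and d^{(1,1)}g(y,x,η,γ) = d^{(1,1)}f(x,y,γ,η) for all x ∈ U, y ∈ V, γ ∈ 𝔏(G), η ∈ 𝔏(H). -/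
/-!
The substance is Schwarz's theorem: continuity of `d^{(1,1)} f` forces `d^{(1,0)} f` to be
differentiable in the direction `(0, η)` with the same derivative. Along the curves
`σ ↦ x γ(σ)` and `τ ↦ y η(τ)` this becomes a statement about functions of two real variables.
In a locally convex space the mean value theorem survives in the form "a difference quotient
lies in every closed convex set containing the derivatives on the interval" (separate by
Hahn–Banach and apply the real mean value theorem). Applied twice, it puts the double difference
quotients of `f` over small rectangles into any closed convex neighbourhood of `d^{(1,1)} f(x, y)`;
letting one side of the rectangle shrink gives the derivative of `d^{(1,0)} f`. Everything else
is the symmetry of the definition and uniqueness of limits in the Hausdorff space `E`.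
-/

open Filter Topology Set

/-- The set of continuous one-parameter subgroups `γ : (ℝ,+) → G`, as a subtype of `C(ℝ, G)`
(hence endowed with the compact-open topology). -/
abbrev OneParam (G : Type*) [TopologicalSpace G] [Group G] : Type _ :=
  {γ : C(ℝ, G) // ∀ s t : ℝ, γ (s + t) = γ s * γ t}

/-- `D_γ f(x) = v`, i.e. `(1/t)(f(x·γ(t)) − f(x)) → v` as `t → 0`. -/
def HasDirDeriv {G E : Type*} [TopologicalSpace G] [Group G]
    [AddCommGroup E] [Module ℝ E] [TopologicalSpace E]
    (f : G → E) (x : G) (γ : OneParam G) (v : E) : Prop :=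
  Tendsto (fun t : ℝ => t⁻¹ • (f (x * γ.1 t) - f x)) (𝓝[≠] (0 : ℝ)) (𝓝 v)

/-- `f : U × V → E` is `C^{1,1}` with partial derivative maps `d10 = d^{(1,0)}f`,
`d01 = d^{(0,1)}f` and `d11 = d^{(1,1)}f` (where `d11 x y γ η = (D_{(γ,0)}D_{(0,η)}f)(x,y)`). -/
def IsC11 {G H E : Type*} [TopologicalSpace G] [Group G] [TopologicalSpace H] [Group H]
    [AddCommGroup E] [Module ℝ E] [TopologicalSpace E]
    (f : G → H → E) (U : Set G) (V : Set H)
    (d10 : G → H → OneParam G → E) (d01 : G → H → OneParam H → E)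
    (d11 : G → H → OneParam G → OneParam H → E) : Prop :=
  ContinuousOn (fun p : G × H => f p.1 p.2) (U ×ˢ V) ∧
  (∀ x ∈ U, ∀ y ∈ V, ∀ γ : OneParam G, HasDirDeriv (fun x' => f x' y) x γ (d10 x y γ)) ∧
  ContinuousOn (fun p : G × H × OneParam G => d10 p.1 p.2.1 p.2.2)
    (U ×ˢ V ×ˢ (univ : Set (OneParam G))) ∧
  (∀ x ∈ U, ∀ y ∈ V, ∀ η : OneParam H, HasDirDeriv (f x) y η (d01 x y η)) ∧
  ContinuousOn (fun p : G × H × OneParam H => d01 p.1 p.2.1 p.2.2)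
    (U ×ˢ V ×ˢ (univ : Set (OneParam H))) ∧
  (∀ x ∈ U, ∀ y ∈ V, ∀ (γ : OneParam G) (η : OneParam H),
    HasDirDeriv (fun x' => d01 x' y η) x γ (d11 x y γ η)) ∧
  ContinuousOn (fun p : G × H × OneParam G × OneParam H => d11 p.1 p.2.1 p.2.2.1 p.2.2.2)
    (U ×ˢ V ×ˢ (univ : Set (OneParam G × OneParam H)))

theorem nhds_basis_isClosed_convex {𝕜 E : Type*} [Field 𝕜] [PartialOrder 𝕜]
    [AddCommGroup E] [Module 𝕜 E] [TopologicalSpace E] [IsTopologicalAddGroup E]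
    [ContinuousConstSMul 𝕜 E] [LocallyConvexSpace 𝕜 E] (x : E) :
    (𝓝 x).HasBasis (fun s => s ∈ 𝓝 x ∧ Convex 𝕜 s ∧ IsClosed s) id := by
  refine hasBasis_self.mpr fun W hW => ?_
  obtain ⟨W₁, hW₁, hW₁c, hW₁W⟩ := exists_mem_nhds_isClosed_subset hW
  obtain ⟨N, ⟨hN, hNc⟩, hNW₁⟩ := (LocallyConvexSpace.convex_basis (𝕜 := 𝕜) x).mem_iff.mp hW₁
  exact ⟨closure N, mem_of_superset hN subset_closure, ⟨hNc.closure, isClosed_closure⟩,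
    (closure_minimal hNW₁ hW₁c).trans hW₁W⟩

section QuotDeriv

variable {E : Type*} [AddCommGroup E] [Module ℝ E] [TopologicalSpace E]

/-- `HasDerivAt` written as a limit of difference quotients; Mathlib states this equivalence
(`hasDerivAt_iff_tendsto_slope_zero`) only for normed codomains. -/
def HasQuotDerivAt (h : ℝ → E) (v : E) (σ : ℝ) : Prop :=
  Tendsto (fun r : ℝ => r⁻¹ • (h (σ + r) - h σ)) (𝓝[≠] 0) (𝓝 v)

theorem HasQuotDerivAt.sub [ContinuousSub E] {h k : ℝ → E} {v w : E} {σ : ℝ}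
    (hh : HasQuotDerivAt h v σ) (hk : HasQuotDerivAt k w σ) :
    HasQuotDerivAt (fun τ => h τ - k τ) (v - w) σ :=
  (Tendsto.sub hh hk).congr fun r => by rw [← smul_sub, sub_sub_sub_comm]

variable [IsTopologicalAddGroup E] [ContinuousSMul ℝ E] [LocallyConvexSpace ℝ E]

theorem inv_smul_sub_mem_of_hasQuotDerivAt {h h' : ℝ → E} {t : ℝ} (ht : t ≠ 0)
    (hh : ∀ σ ∈ uIcc 0 t, HasQuotDerivAt h (h' σ) σ) {C : Set E} (hCc : Convex ℝ C)
    (hCl : IsClosed C) (hC : ∀ σ ∈ uIcc 0 t, h' σ ∈ C) :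
    t⁻¹ • (h t - h 0) ∈ C := by
  by_contra hq
  obtain ⟨T, u, hTq, hTC⟩ := geometric_hahn_banach_point_closed hCc hCl hq
  have hT : ∀ σ ∈ uIcc 0 t, HasDerivAt (fun σ => T (h σ)) (T (h' σ)) σ := fun σ hσ =>
    hasDerivAt_iff_tendsto_slope_zero.mpr
      (((T.continuous.tendsto _).comp (hh σ hσ)).congr fun r => by simp)
  obtain ⟨c, hc, hslope⟩ := exists_hasDerivAt_eq_slope (fun σ => T (h σ)) (fun σ => T (h' σ))
    (min_lt_max.mpr ht.symm) (fun σ hσ => (hT σ hσ).continuousAt.continuousWithinAt)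
    (fun σ hσ => hT σ (Ioo_subset_Icc_self hσ))
  have hTc : T (h' c) = T (t⁻¹ • (h t - h 0)) := by
    rw [hslope, map_smul, map_sub, smul_eq_mul]
    rcases le_total 0 t with h0 | h0
    · rw [max_eq_right h0, min_eq_left h0, sub_zero, div_eq_inv_mul]
    · rw [max_eq_left h0, min_eq_right h0, zero_sub, div_neg, ← neg_div, neg_sub,
        div_eq_inv_mul]
  linarith [hTC _ (hC c (Ioo_subset_Icc_self hc))]

theorem inv_smul_inv_smul_sub_sub_mem {F F₂ F₁₂ : ℝ → ℝ → E} {s t : ℝ}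
    (hs : s ≠ 0) (ht : t ≠ 0)
    (hF : ∀ σ ∈ uIcc 0 s, ∀ τ ∈ uIcc 0 t, HasQuotDerivAt (F σ) (F₂ σ τ) τ)
    (hF₂ : ∀ σ ∈ uIcc 0 s, ∀ τ ∈ uIcc 0 t, HasQuotDerivAt (F₂ · τ) (F₁₂ σ τ) σ)
    {C : Set E} (hCc : Convex ℝ C) (hCl : IsClosed C)
    (hC : ∀ σ ∈ uIcc 0 s, ∀ τ ∈ uIcc 0 t, F₁₂ σ τ ∈ C) :
    s⁻¹ • t⁻¹ • ((F s t - F 0 t) - (F s 0 - F 0 0)) ∈ C := by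
  have hF₂s : ∀ τ ∈ uIcc 0 t, s⁻¹ • (F₂ s τ - F₂ 0 τ) ∈ C := fun τ hτ =>
    inv_smul_sub_mem_of_hasQuotDerivAt hs (fun σ hσ => hF₂ σ hσ τ hτ) hCc hCl
      (fun σ hσ => hC σ hσ τ hτ)
  exact inv_smul_sub_mem_of_hasQuotDerivAt (h := fun τ => F s τ - F 0 τ) ht
    (fun τ hτ => (hF s right_mem_uIcc τ hτ).sub (hF 0 left_mem_uIcc τ hτ))
    (hCc.linear_preimage (LinearMap.lsmul ℝ E s⁻¹)) (hCl.preimage (continuous_const_smul s⁻¹))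
    hF₂s

theorem hasQuotDerivAt_of_continuousAt_mixed {F F₂ F₁₂ : ℝ → ℝ → E} {F₁ : ℝ → E}
    (hF₁ : ∀ᶠ τ in 𝓝 0, HasQuotDerivAt (F · τ) (F₁ τ) 0)
    (hF : ∀ᶠ p : ℝ × ℝ in 𝓝 (0, 0), HasQuotDerivAt (F p.1) (F₂ p.1 p.2) p.2)
    (hF₂ : ∀ᶠ p : ℝ × ℝ in 𝓝 (0, 0), HasQuotDerivAt (F₂ · p.2) (F₁₂ p.1 p.2) p.1)
    (hF₁₂ : ContinuousAt (fun p : ℝ × ℝ => F₁₂ p.1 p.2) (0, 0)) :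
    HasQuotDerivAt F₁ (F₁₂ 0 0) 0 := by
  refine (nhds_basis_isClosed_convex (𝕜 := ℝ) _).tendsto_right_iff.mpr
    fun C ⟨hC, hCc, hCl⟩ => ?_
  have hsquare := hF.and (hF₂.and (hF₁₂.preimage_mem_nhds hC))
  rw [nhds_prod_eq] at hsquare
  obtain ⟨δ, hδ, hδsq⟩ := (Metric.nhds_basis_closedBall.prod_self).mem_iff.mp hsquare
  have hsq : ∀ σ ∈ Metric.closedBall (0 : ℝ) δ, ∀ τ ∈ Metric.closedBall (0 : ℝ) δ,
      HasQuotDerivAt (F σ) (F₂ σ τ) τ ∧ HasQuotDerivAt (F₂ · τ) (F₁₂ σ τ) σ ∧ F₁₂ σ τ ∈ C :=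
    fun σ hσ τ hτ => hδsq (mk_mem_prod hσ hτ)
  have huIcc : ∀ s ∈ Metric.closedBall (0 : ℝ) δ, uIcc 0 s ⊆ Metric.closedBall 0 δ := by
    intro s hs
    rw [Real.closedBall_eq_Icc] at hs ⊢
    exact uIcc_subset_Icc (by simpa using hδ.le) hs
  have hrect : ∀ s ∈ Metric.closedBall (0 : ℝ) δ, ∀ t ∈ Metric.closedBall (0 : ℝ) δ,
      s ≠ 0 → t ≠ 0 → s⁻¹ • t⁻¹ • ((F s t - F 0 t) - (F s 0 - F 0 0)) ∈ C :=
    fun s hs t ht hs0 ht0 => inv_smul_inv_smul_sub_sub_mem hs0 ht0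
      (fun σ hσ τ hτ => (hsq σ (huIcc s hs hσ) τ (huIcc t ht hτ)).1)
      (fun σ hσ τ hτ => (hsq σ (huIcc s hs hσ) τ (huIcc t ht hτ)).2.1) hCc hCl
      (fun σ hσ τ hτ => (hsq σ (huIcc s hs hσ) τ (huIcc t ht hτ)).2.2)
  have hball : ∀ᶠ s in 𝓝[≠] (0 : ℝ), s ∈ Metric.closedBall 0 δ ∧ s ≠ 0 :=
    (eventually_nhdsWithin_of_eventually_nhds (Metric.closedBall_mem_nhds 0 hδ)).and
      self_mem_nhdsWithin
  filter_upwards [hball, nhdsWithin_le_nhds hF₁] with t ⟨ht, ht0⟩ hF₁t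
  have hlim : Tendsto (fun s => s⁻¹ • t⁻¹ • ((F s t - F 0 t) - (F s 0 - F 0 0))) (𝓝[≠] 0)
      (𝓝 (t⁻¹ • (F₁ t - F₁ 0))) :=
    ((hF₁t.sub hF₁.self_of_nhds).const_smul t⁻¹).congr fun s => by
      simp only [zero_add]; rw [smul_comm, sub_sub_sub_comm]
  simpa only [zero_add, id] using
    hCl.mem_of_tendsto hlim (hball.mono fun s ⟨hs, hs0⟩ => hrect s hs t ht hs0 ht0)

end QuotDeriv

namespace OneParam

variable {G : Type*} [TopologicalSpace G] [Group G]

theorem apply_zero (γ : OneParam G) : γ.1 0 = 1 :=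
  mul_eq_left.mp (by rw [← γ.2 0 0, add_zero])

theorem eventually_mul_mem [ContinuousMul G] (γ : OneParam G) {U : Set G} (hU : IsOpen U)
    {x : G} (hx : x ∈ U) : ∀ᶠ s in 𝓝 (0 : ℝ), x * γ.1 s ∈ U :=
  (continuous_const.mul γ.1.continuous).continuousAt.preimage_mem_nhds
    (by simpa only [Pi.mul_apply, apply_zero, mul_one] using hU.mem_nhds hx)

end OneParam

section HasDirDeriv

variable {G E : Type*} [TopologicalSpace G] [Group G]
  [AddCommGroup E] [Module ℝ E] [TopologicalSpace E]
  {φ ψ : G → E} {x : G} {γ : OneParam G} {v w : E}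

theorem hasDirDeriv_mul_iff_hasQuotDerivAt {σ : ℝ} :
    HasDirDeriv φ (x * γ.1 σ) γ v ↔ HasQuotDerivAt (fun s => φ (x * γ.1 s)) v σ := by
  simp only [HasDirDeriv, HasQuotDerivAt, mul_assoc, γ.2]

theorem hasDirDeriv_iff_hasQuotDerivAt :
    HasDirDeriv φ x γ v ↔ HasQuotDerivAt (fun s => φ (x * γ.1 s)) v 0 := by
  simpa only [OneParam.apply_zero, mul_one] using
    hasDirDeriv_mul_iff_hasQuotDerivAt (φ := φ) (x := x) (σ := 0)

theorem HasDirDeriv.unique [T2Space E] (hv : HasDirDeriv φ x γ v) (hw : HasDirDeriv φ x γ w) :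
    v = w :=
  tendsto_nhds_unique hv hw

theorem HasDirDeriv.congr_of_eqOn [ContinuousMul G] {U : Set G} (hU : IsOpen U) (hx : x ∈ U)
    (hφψ : EqOn φ ψ U) (hv : HasDirDeriv φ x γ v) : HasDirDeriv ψ x γ v :=
  hv.congr' <| eventually_nhdsWithin_of_eventually_nhds <|
    (γ.eventually_mul_mem hU hx).mono fun s hs => by rw [hφψ hs, hφψ hx]

end HasDirDeriv

namespace IsC11

variable {G H E : Type*} [TopologicalSpace G] [Group G] [TopologicalSpace H] [Group H]
  [AddCommGroup E] [Module ℝ E] [TopologicalSpace E]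
  {f : G → H → E} {U : Set G} {V : Set H} {d10 : G → H → OneParam G → E}
  {d01 : G → H → OneParam H → E} {d11 : G → H → OneParam G → OneParam H → E}
  [ContinuousMul G] [ContinuousMul H] [IsTopologicalAddGroup E] [ContinuousSMul ℝ E]
  [LocallyConvexSpace ℝ E]

theorem hasDirDeriv_d10 (hf : IsC11 f U V d10 d01 d11)
    (hU : IsOpen U) (hV : IsOpen V) {x : G} (hx : x ∈ U) {y : H} (hy : y ∈ V)
    (γ : OneParam G) (η : OneParam H) :
    HasDirDeriv (fun y' => d10 x y' γ) y η (d11 x y γ η) := by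
  obtain ⟨-, hd10, -, hd01, -, hd11, hd11c⟩ := hf
  have hUV : ∀ᶠ p : ℝ × ℝ in 𝓝 (0, 0), x * γ.1 p.1 ∈ U ∧ y * η.1 p.2 ∈ V :=
    (γ.eventually_mul_mem hU hx).prod_nhds (η.eventually_mul_mem hV hy)
  have hcont : ContinuousAt (fun p : ℝ × ℝ => d11 (x * γ.1 p.1) (y * η.1 p.2) γ η) (0, 0) := by
    refine ContinuousAt.comp_of_eq (y := (x, y, γ, η))
      (f := fun p : ℝ × ℝ => (x * γ.1 p.1, y * η.1 p.2, γ, η))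
      (hd11c.continuousAt ((hU.prod (hV.prod isOpen_univ)).mem_nhds ⟨hx, hy, trivial⟩))
      (by fun_prop) ?_
    simp only [OneParam.apply_zero, mul_one]
  -- Each `(e :)` elaborates `e` before its type is matched with the expected one, which would
  -- otherwise be a higher-order unification problem.
  have h := hasQuotDerivAt_of_continuousAt_mixed (F := fun σ τ => f (x * γ.1 σ) (y * η.1 τ))
    (F₁ := fun τ => d10 x (y * η.1 τ) γ) (F₂ := fun σ τ => d01 (x * γ.1 σ) (y * η.1 τ) η)
    (F₁₂ := fun σ τ => d11 (x * γ.1 σ) (y * η.1 τ) γ η)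
    ((η.eventually_mul_mem hV hy).mono fun τ hτ =>
      (hasDirDeriv_iff_hasQuotDerivAt.mp (hd10 x hx _ hτ γ) :))
    (hUV.mono fun p hp => (hasDirDeriv_mul_iff_hasQuotDerivAt.mp (hd01 _ hp.1 _ hp.2 η) :))
    (hUV.mono fun p hp => (hasDirDeriv_mul_iff_hasQuotDerivAt.mp (hd11 _ hp.1 _ hp.2 γ η) :))
    hcont
  simpa only [hasDirDeriv_iff_hasQuotDerivAt, OneParam.apply_zero, mul_one] using h

theorem flip (hf : IsC11 f U V d10 d01 d11) (hU : IsOpen U) (hV : IsOpen V) :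
    IsC11 (fun y x => f x y) V U (fun y x η => d01 x y η) (fun y x γ => d10 x y γ)
      (fun y x η γ => d11 x y γ η) := by
  have hschwarz := fun y (hy : y ∈ V) x (hx : x ∈ U) η γ => hf.hasDirDeriv_d10 hU hV hx hy γ η
  obtain ⟨hfc, hd10, hd10c, hd01, hd01c, -, hd11c⟩ := hf
  refine ⟨hfc.comp continuous_swap.continuousOn fun p hp => ⟨hp.2, hp.1⟩,
    fun y hy x hx η => hd01 x hx y hy η, ?_, fun y hy x hx γ => hd10 x hx y hy γ, ?_,
    hschwarz, ?_⟩
  · exact hd01c.comp (f := fun p : H × G × OneParam H => (p.2.1, p.1, p.2.2))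
      (by fun_prop) fun p hp => ⟨hp.2.1, hp.1, trivial⟩
  · exact hd10c.comp (f := fun p : H × G × OneParam G => (p.2.1, p.1, p.2.2))
      (by fun_prop) fun p hp => ⟨hp.2.1, hp.1, trivial⟩
  · exact hd11c.comp
      (f := fun p : H × G × OneParam H × OneParam G => (p.2.1, p.1, p.2.2.2, p.2.2.1))
      (by fun_prop) fun p hp => ⟨hp.2.1, hp.1, trivial⟩

end IsC11

/-- `f : U × V → E` is `C^{1,1}` if and only if the flipped map
`g(y,x) := f(x,y)` is `C^{1,1}` (with the roles of `G` and `H` interchanged); in this case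
`d^{(1,0)}g(y,x,η) = d^{(0,1)}f(x,y,η)`, `d^{(0,1)}g(y,x,γ) = d^{(1,0)}f(x,y,γ)` and
`d^{(1,1)}g(y,x,η,γ) = d^{(1,1)}f(x,y,γ,η)` on `U × V`. -/
theorem isC11_flip_iff
    {G H E : Type*} [Group G] [TopologicalSpace G] [IsTopologicalGroup G]
    [Group H] [TopologicalSpace H] [IsTopologicalGroup H]
    [AddCommGroup E] [Module ℝ E] [TopologicalSpace E] [IsTopologicalAddGroup E]
    [ContinuousSMul ℝ E] [LocallyConvexSpace ℝ E] [T2Space E]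
    (U : Set G) (V : Set H) (hU : IsOpen U) (hV : IsOpen V)
    (f : G → H → E) :
    ((∃ d10 d01 d11, IsC11 f U V d10 d01 d11) ↔
      (∃ e10 e01 e11, IsC11 (fun y x => f x y) V U e10 e01 e11)) ∧
    (∀ d10 d01 d11 e10 e01 e11, IsC11 f U V d10 d01 d11 →
      IsC11 (fun y x => f x y) V U e10 e01 e11 →
      ∀ x ∈ U, ∀ y ∈ V, ∀ (γ : OneParam G) (η : OneParam H),
        e10 y x η = d01 x y η ∧ e01 y x γ = d10 x y γ ∧ e11 y x η γ = d11 x y γ η) := by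
  refine ⟨⟨fun ⟨_, _, _, hf⟩ => ⟨_, _, _, hf.flip hU hV⟩,
    fun ⟨_, _, _, hg⟩ => ⟨_, _, _, hg.flip hV hU⟩⟩, ?_⟩
  intro d10 d01 d11 e10 e01 e11 hf hg x hx y hy γ η
  have hschwarz := hf.hasDirDeriv_d10 hU hV hx hy γ η
  obtain ⟨-, hd10, -, hd01, -, -, -⟩ := hf
  obtain ⟨-, he10, -, he01, -, he11, -⟩ := hg
  have h01 : EqOn (fun y' => e01 y' x γ) (fun y' => d10 x y' γ) V := fun y' hy' =>
    (he01 y' hy' x hx γ).unique (hd10 x hx y' hy' γ)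
  exact ⟨(he10 y hy x hx η).unique (hd01 x hx y hy η), h01 hy,
    ((he11 y hy x hx η γ).congr_of_eqOn hV hy h01).unique hschwarz⟩
end

section
/- Let G and H be topological groups, U ⊆ G and V ⊆ H open subsets, and E a locally convex space. If f : U × V → E is C^{1,1}, then f is C¹ as a map on the open subset U × V of the product group G × H, where continuous one-parameter subgroups of G × H are identified with pairs (γ,η) ∈ 𝔏(G) × 𝔏(H); moreover, for all (x,y) ∈ U × V, γ ∈ 𝔏(G), η ∈ 𝔏(H), df((x,y),(γ,η)) = d^{(0,1)}f(x,y,η) + d^{(1,0)}f(x,y,γ). -/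
/-!
Split `f(x·γ(t), y·η(t)) − f(x, y)` at `f(x·γ(t), y)`. Divided by `t`, the second difference
tends to `d^{(1,0)}f(x, y, γ)` by definition. For the first, the mean value theorem in the locally
convex space `E` (Hahn–Banach reduces it to the real one) puts the quotient in every closed convex
set containing the values `d^{(0,1)}f(x·γ(t), y·η(s), η)` for `s` between `0` and `t`, and by
joint continuity of `d^{(0,1)}f` these are all close to `d^{(0,1)}f(x, y, η)` when `t` is small.
-/

open Filter Topology Set

/-- First component of a one-parameter subgroup of `G × H` (part of the canonical
identification `𝔏(G × H) ≅ 𝔏(G) × 𝔏(H)`). -/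
def OPfst {G H : Type*} [TopologicalSpace G] [Group G] [TopologicalSpace H] [Group H]
    (ψ : OneParam (G × H)) : OneParam G :=
  ⟨⟨fun t => (ψ.1 t).1, continuous_fst.comp ψ.1.continuous⟩,
    fun s t => by simpa using congrArg Prod.fst (ψ.2 s t)⟩

/-- Second component of a one-parameter subgroup of `G × H` (part of the canonical
identification `𝔏(G × H) ≅ 𝔏(G) × 𝔏(H)`). -/
def OPsnd {G H : Type*} [TopologicalSpace G] [Group G] [TopologicalSpace H] [Group H]
    (ψ : OneParam (G × H)) : OneParam H :=
  ⟨⟨fun t => (ψ.1 t).2, continuous_snd.comp ψ.1.continuous⟩,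
    fun s t => by simpa using congrArg Prod.snd (ψ.2 s t)⟩


section MeanValue

variable {E : Type*} [AddCommGroup E] [Module ℝ E] [TopologicalSpace E]

theorem exists_mem_nhds_isClosed_convex_subset [IsTopologicalAddGroup E] [ContinuousSMul ℝ E]
    [LocallyConvexSpace ℝ E] {v : E} {N : Set E} (hN : N ∈ 𝓝 v) :
    ∃ K ∈ 𝓝 v, IsClosed K ∧ Convex ℝ K ∧ K ⊆ N := by
  obtain ⟨C, hC, hCclosed, hCN⟩ := exists_mem_nhds_isClosed_subset hN
  obtain ⟨W, ⟨hW, hWconv⟩, hWC⟩ := (LocallyConvexSpace.convex_basis (𝕜 := ℝ) v).mem_iff.mp hC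
  exact ⟨closure W, mem_of_superset hW subset_closure, isClosed_closure, hWconv.closure,
    (closure_minimal hWC hCclosed).trans hCN⟩

theorem continuousAt_of_tendsto_slope [ContinuousAdd E] [ContinuousSMul ℝ E] {g : ℝ → E}
    {s : ℝ} {v : E} (h : Tendsto (slope g s) (𝓝[≠] s) (𝓝 v)) : ContinuousAt g s := by
  rw [← continuousWithinAt_compl_self, ContinuousWithinAt]
  have hsub : Tendsto (fun τ => τ - s) (𝓝[≠] s) (𝓝 0) :=
    tendsto_nhdsWithin_of_tendsto_nhds (by simpa using (continuous_sub_right s).tendsto s)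
  have := (hsub.smul h).add_const (g s)
  simpa only [zero_smul, zero_add, sub_smul_slope, vsub_eq_sub, sub_add_cancel] using this

theorem slope_mem_of_tendsto_slope_mem [IsTopologicalAddGroup E] [ContinuousSMul ℝ E]
    [LocallyConvexSpace ℝ E] {g g' : ℝ → E} {K : Set E} (hKconv : Convex ℝ K)
    (hKclosed : IsClosed K) {a b : ℝ} (hab : a ≠ b) (hg : ContinuousOn g (uIcc a b))
    (hderiv : ∀ s ∈ uIoo a b, Tendsto (slope g s) (𝓝[≠] s) (𝓝 (g' s)))
    (hK : ∀ s ∈ uIoo a b, g' s ∈ K) : slope g a b ∈ K := by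
  wlog hlt : a < b generalizing a b
  · rw [slope_comm]
    rw [uIcc_comm] at hg
    rw [uIoo_comm] at hderiv hK
    exact this hab.symm hg hderiv hK (hab.lt_or_gt.resolve_left hlt)
  rw [uIcc_of_lt hlt] at hg
  rw [uIoo_of_lt hlt] at hderiv hK
  by_contra hnot
  obtain ⟨lam, u, hlam, hu⟩ := geometric_hahn_banach_closed_point hKconv hKclosed hnot
  have hslope : ∀ s τ, slope (lam ∘ g) s τ = lam (slope g s τ) :=
    LinearMap.slope_comp (lam : E →ₗ[ℝ] ℝ) g
  have hφ : ∀ s ∈ Ioo a b, HasDerivAt (lam ∘ g) (lam (g' s)) s := fun s hs => by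
    rw [hasDerivAt_iff_tendsto_slope, funext (hslope s)]
    exact (lam.continuous.tendsto _).comp (hderiv s hs)
  obtain ⟨c, hc, hφc⟩ :=
    exists_hasDerivAt_eq_slope (lam ∘ g) _ hlt (lam.continuous.comp_continuousOn hg) hφ
  have : lam (slope g a b) = lam (g' c) := by
    rw [hφc, ← slope_def_field, hslope]
  linarith [hlam _ (hK c hc)]

theorem tendsto_slope_zero_of_continuousAt_deriv [IsTopologicalAddGroup E] [ContinuousSMul ℝ E]
    [LocallyConvexSpace ℝ E] {F F' : ℝ → ℝ → E}
    (hderiv : ∀ᶠ p : ℝ × ℝ in 𝓝 0, Tendsto (slope (F p.1) p.2) (𝓝[≠] p.2) (𝓝 (F' p.1 p.2)))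
    (hcont : ContinuousAt (Function.uncurry F') 0) :
    Tendsto (fun t => slope (F t) 0 t) (𝓝[≠] 0) (𝓝 (F' 0 0)) := by
  refine fun N hN => show ∀ᶠ t in 𝓝[≠] 0, slope (F t) 0 t ∈ N from ?_
  obtain ⟨K, hKmem, hKclosed, hKconv, hKN⟩ := exists_mem_nhds_isClosed_convex_subset hN
  obtain ⟨ε, hε, hball⟩ := Metric.eventually_nhds_iff.mp (hderiv.and (hcont.eventually_mem hKmem))
  have hnear : ∀ {t s : ℝ}, |t| < ε → s ∈ uIcc 0 t →
      Tendsto (slope (F t) s) (𝓝[≠] s) (𝓝 (F' t s)) ∧ F' t s ∈ K := fun {t s} ht hs => by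
    have ht' : |t - 0| < ε := by rwa [sub_zero]
    refine @hball (t, s) ?_
    simp only [Prod.dist_eq, Prod.fst_zero, Prod.snd_zero, Real.dist_eq]
    exact max_lt ht' ((abs_sub_left_of_mem_uIcc hs).trans_lt ht')
  filter_upwards [nhdsWithin_le_nhds (Metric.ball_mem_nhds 0 hε), self_mem_nhdsWithin]
    with t ht ht0
  rw [Metric.mem_ball, Real.dist_eq, sub_zero] at ht
  refine hKN (slope_mem_of_tendsto_slope_mem hKconv hKclosed (Ne.symm ht0)
    (fun s hs => (continuousAt_of_tendsto_slope (hnear ht hs).1).continuousWithinAt)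
    (fun s hs => (hnear ht (uIoo_subset_uIcc_self hs)).1)
    (fun s hs => (hnear ht (uIoo_subset_uIcc_self hs)).2))

end MeanValue

theorem OneParam.map_zero {G : Type*} [TopologicalSpace G] [Group G] (γ : OneParam G) :
    γ.1 0 = 1 := by
  simpa using γ.2 0 0

@[fun_prop]
theorem continuous_OPfst {G H : Type*} [TopologicalSpace G] [Group G] [TopologicalSpace H]
    [Group H] : Continuous (OPfst (G := G) (H := H)) :=
  ((ContinuousMap.continuous_postcomp ⟨Prod.fst, continuous_fst⟩).comp
    continuous_subtype_val).subtype_mk _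

@[fun_prop]
theorem continuous_OPsnd {G H : Type*} [TopologicalSpace G] [Group G] [TopologicalSpace H]
    [Group H] : Continuous (OPsnd (G := G) (H := H)) :=
  ((ContinuousMap.continuous_postcomp ⟨Prod.snd, continuous_snd⟩).comp
    continuous_subtype_val).subtype_mk _

theorem HasDirDeriv.tendsto_slope {G E : Type*} [TopologicalSpace G] [Group G]
    [AddCommGroup E] [Module ℝ E] [TopologicalSpace E] {f : G → E} {x : G} {γ : OneParam G}
    {s : ℝ} {v : E} (h : HasDirDeriv f (x * γ.1 s) γ v) :
    Tendsto (slope (fun τ => f (x * γ.1 τ)) s) (𝓝[≠] s) (𝓝 v) := by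
  have hshift : 𝓝[≠] s = map (s + ·) (𝓝[≠] 0) := by simp
  rw [hshift, tendsto_map'_iff]
  refine h.congr fun τ => ?_
  simp only [Function.comp_apply, slope_def_module, add_sub_cancel_left, γ.2, mul_assoc]

section Partial

variable {G H E : Type*} [Group G] [TopologicalSpace G] [IsTopologicalGroup G]
  [Group H] [TopologicalSpace H] [IsTopologicalGroup H]
  [AddCommGroup E] [Module ℝ E] [TopologicalSpace E] [IsTopologicalAddGroup E]
  [ContinuousSMul ℝ E] [LocallyConvexSpace ℝ E]

theorem tendsto_inv_smul_sub_of_continuousOn_dirDeriv {U : Set G} {V : Set H} (hU : IsOpen U)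
    (hV : IsOpen V) {f : G → H → E} {d01 : G → H → OneParam H → E}
    (hd01 : ∀ x ∈ U, ∀ y ∈ V, ∀ η : OneParam H, HasDirDeriv (f x) y η (d01 x y η))
    (hd01c : ContinuousOn (fun p : G × H × OneParam H => d01 p.1 p.2.1 p.2.2)
      (U ×ˢ V ×ˢ (univ : Set (OneParam H))))
    {x : G} (hx : x ∈ U) {y : H} (hy : y ∈ V) (γ : OneParam G) (η : OneParam H) :
    Tendsto (fun t : ℝ => t⁻¹ • (f (x * γ.1 t) (y * η.1 t) - f (x * γ.1 t) y))
      (𝓝[≠] 0) (𝓝 (d01 x y η)) := by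
  set c : ℝ × ℝ → G × H × OneParam H := fun p => (x * γ.1 p.1, y * η.1 p.2, η)
  have hc : Continuous c := by fun_prop
  have hc0 : c 0 = (x, y, η) := by simp [c, OneParam.map_zero]
  have hUV : U ×ˢ V ×ˢ univ ∈ 𝓝 (c 0) :=
    hc0 ▸ (hU.prod (hV.prod isOpen_univ)).mem_nhds ⟨hx, hy, trivial⟩
  have key := tendsto_slope_zero_of_continuousAt_deriv
    (F := fun t s => f (x * γ.1 t) (y * η.1 s)) (F' := fun t s => d01 (x * γ.1 t) (y * η.1 s) η)
    (Eventually.mono (hc.continuousAt.preimage_mem_nhds hUV) fun p hp =>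
      (hd01 _ hp.1 _ hp.2.1 η).tendsto_slope)
    ((hd01c.continuousAt hUV).comp hc.continuousAt)
  simpa only [slope_def_module, sub_zero, OneParam.map_zero, mul_one] using key

end Partial

theorem isC1_of_isC11_general
    {G H E : Type*} [Group G] [TopologicalSpace G] [IsTopologicalGroup G]
    [Group H] [TopologicalSpace H] [IsTopologicalGroup H]
    [AddCommGroup E] [Module ℝ E] [TopologicalSpace E] [IsTopologicalAddGroup E]
    [ContinuousSMul ℝ E] [LocallyConvexSpace ℝ E]
    (U : Set G) (V : Set H) (hU : IsOpen U) (hV : IsOpen V)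
    (f : G → H → E)
    (d10 : G → H → OneParam G → E) (d01 : G → H → OneParam H → E)
    (hd10 : ∀ x ∈ U, ∀ y ∈ V, ∀ γ : OneParam G,
      HasDirDeriv (fun x' => f x' y) x γ (d10 x y γ))
    (hd10c : ContinuousOn (fun p : G × H × OneParam G => d10 p.1 p.2.1 p.2.2)
      (U ×ˢ V ×ˢ (univ : Set (OneParam G))))
    (hd01 : ∀ x ∈ U, ∀ y ∈ V, ∀ η : OneParam H,
      HasDirDeriv (f x) y η (d01 x y η))
    (hd01c : ContinuousOn (fun p : G × H × OneParam H => d01 p.1 p.2.1 p.2.2)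
      (U ×ˢ V ×ˢ (univ : Set (OneParam H)))) :
    (∀ x ∈ U, ∀ y ∈ V, ∀ ψ : OneParam (G × H),
      HasDirDeriv (fun p : G × H => f p.1 p.2) (x, y) ψ
        (d01 x y (OPsnd ψ) + d10 x y (OPfst ψ))) ∧
    ContinuousOn
      (fun q : (G × H) × OneParam (G × H) =>
        d01 q.1.1 q.1.2 (OPsnd q.2) + d10 q.1.1 q.1.2 (OPfst q.2))
      ((U ×ˢ V) ×ˢ (univ : Set (OneParam (G × H)))) := by
  refine ⟨fun x hx y hy ψ => ?_, ?_⟩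
  · refine ((tendsto_inv_smul_sub_of_continuousOn_dirDeriv hU hV hd01 hd01c hx hy
      (OPfst ψ) (OPsnd ψ)).add (hd10 x hx y hy (OPfst ψ))).congr fun t => ?_
    rw [← smul_add, sub_add_sub_cancel]
    rfl
  · have hsnd : Continuous fun q : (G × H) × OneParam (G × H) => (q.1.1, q.1.2, OPsnd q.2) := by
      fun_prop
    have hfst : Continuous fun q : (G × H) × OneParam (G × H) => (q.1.1, q.1.2, OPfst q.2) := by
      fun_prop
    exact (hd01c.comp hsnd.continuousOn fun q hq => ⟨hq.1.1, hq.1.2, trivial⟩).add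
      (hd10c.comp hfst.continuousOn fun q hq => ⟨hq.1.1, hq.1.2, trivial⟩)

/-- If `f : U × V → E` is `C^{1,1}` (with partial derivative maps `d10`, `d01`,
`d11`), then `f` is `C¹` on the open subset `U × V` of the product group `G × H`, where
one-parameter subgroups `ψ ∈ 𝔏(G × H)` correspond to pairs `(γ,η) ∈ 𝔏(G) × 𝔏(H)`, and
`df((x,y),(γ,η)) = d^{(0,1)}f(x,y,η) + d^{(1,0)}f(x,y,γ)`. -/
theorem isC1_of_isC11
    {G H E : Type*} [Group G] [TopologicalSpace G] [IsTopologicalGroup G]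
    [Group H] [TopologicalSpace H] [IsTopologicalGroup H]
    [AddCommGroup E] [Module ℝ E] [TopologicalSpace E] [IsTopologicalAddGroup E]
    [ContinuousSMul ℝ E] [LocallyConvexSpace ℝ E] [T2Space E]
    (U : Set G) (V : Set H) (hU : IsOpen U) (hV : IsOpen V)
    (f : G → H → E)
    (d10 : G → H → OneParam G → E) (d01 : G → H → OneParam H → E)
    (d11 : G → H → OneParam G → OneParam H → E)
    (hf : ContinuousOn (fun p : G × H => f p.1 p.2) (U ×ˢ V))
    (hd10 : ∀ x ∈ U, ∀ y ∈ V, ∀ γ : OneParam G,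
      HasDirDeriv (fun x' => f x' y) x γ (d10 x y γ))
    (hd10c : ContinuousOn (fun p : G × H × OneParam G => d10 p.1 p.2.1 p.2.2)
      (U ×ˢ V ×ˢ (univ : Set (OneParam G))))
    (hd01 : ∀ x ∈ U, ∀ y ∈ V, ∀ η : OneParam H,
      HasDirDeriv (f x) y η (d01 x y η))
    (hd01c : ContinuousOn (fun p : G × H × OneParam H => d01 p.1 p.2.1 p.2.2)
      (U ×ˢ V ×ˢ (univ : Set (OneParam H))))
    (hd11 : ∀ x ∈ U, ∀ y ∈ V, ∀ (γ : OneParam G) (η : OneParam H),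
      HasDirDeriv (fun x' => d01 x' y η) x γ (d11 x y γ η))
    (hd11c : ContinuousOn
      (fun p : G × H × OneParam G × OneParam H => d11 p.1 p.2.1 p.2.2.1 p.2.2.2)
      (U ×ˢ V ×ˢ (univ : Set (OneParam G × OneParam H)))) :
    (∀ x ∈ U, ∀ y ∈ V, ∀ ψ : OneParam (G × H),
      HasDirDeriv (fun p : G × H => f p.1 p.2) (x, y) ψ
        (d01 x y (OPsnd ψ) + d10 x y (OPfst ψ))) ∧
    ContinuousOn
      (fun q : (G × H) × OneParam (G × H) =>
        d01 q.1.1 q.1.2 (OPsnd q.2) + d10 q.1.1 q.1.2 (OPfst q.2))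
      ((U ×ˢ V) ×ˢ (univ : Set (OneParam (G × H)))) :=
  isC1_of_isC11_general U V hU hV f d10 d01 hd10 hd10c hd01 hd01c
end
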